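/- Let A be an entrywise nonnegative m×n real matrix. Then τ₊(A) is at least the fractional rectangle cover number of A, i.e., τ₊(A) ≥ χ_frac(RG(A)). -/

import Mathlib

/-!
By von Neumann's minimax theorem the fractional covering LP of the support of `A`
by monochromatic rectangles has a dual packing `y ≥ 0` of the same value, with
`∑_{(i,j) ∈ I×J} y i j ≤ 1` for every monochromatic rectangle `I×J`. The functional
`L M = ∑ y i j / A i j * M i j` over the support of `A` is then at most `1` on every atom:
the support of a nonnegative rank-one matrix `R ≤ A` is a rectangle inside the support of `A`,
and `R ≤ A` entrywise. Hence `χ_frac = L A ≤ τ₊(A)`.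
-/

open Matrix

/-- The set of atoms `𝒜₊(A)`: rank-at-most-one matrices `R` with `0 ≤ R ≤ A` entrywise. -/
noncomputable def Aplus {m n : Type*} [Fintype m] [Fintype n]
    (A : Matrix m n ℝ) : Set (Matrix m n ℝ) :=
  {R | R.rank ≤ 1 ∧ ∀ i j, 0 ≤ R i j ∧ R i j ≤ A i j}

/-- `τ₊(A)`: supremum of `L(A)` over linear functionals `L` with `L ≤ 1` on `𝒜₊(A)`. -/
noncomputable def tauPlus {m n : Type*} [Fintype m] [Fintype n]
    (A : Matrix m n ℝ) : ℝ :=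
  sSup {x | ∃ L : Matrix m n ℝ →ₗ[ℝ] ℝ, (∀ R ∈ Aplus A, L R ≤ 1) ∧ L A = x}

namespace Matrix

theorem mul_eq_mul_of_rank_le_one {K m n : Type*} [Field K] [Fintype n]
    {R : Matrix m n K} (h : R.rank ≤ 1) (i i' : m) (j j' : n) :
    R i j * R i' j' = R i j' * R i' j := by
  have hdet : (R.submatrix ![i, i'] ![j, j']).det = 0 := by
    by_contra hdet
    have h2 := rank_of_isUnit _ ((isUnit_iff_isUnit_det _).2 (Ne.isUnit hdet))
    have := R.rank_submatrix_le ![i, i'] ![j, j']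
    simp only [Fintype.card_fin] at h2
    omega
  rw [det_fin_two] at hdet
  simpa [sub_eq_zero] using hdet

theorem pos_of_rank_le_one {K m n : Type*} [Field K] [LinearOrder K] [IsStrictOrderedRing K]
    [Fintype n] {R : Matrix m n K} (h : R.rank ≤ 1) (hR : ∀ i j, 0 ≤ R i j) {i i' : m}
    {j j' : n} (hij' : 0 < R i j') (hi'j : 0 < R i' j) : 0 < R i j := by
  have hprod : 0 < R i j * R i' j' := by
    rw [mul_eq_mul_of_rank_le_one h]; positivity
  exact (hR i j).lt_of_ne fun h0 => by simp [← h0] at hprod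

theorem single_eq_vecMulVec {α m n : Type*} [MulZeroOneClass α] [DecidableEq m] [DecidableEq n]
    (i : m) (j : n) (a : α) : single i j a = vecMulVec (Pi.single i 1) (Pi.single j a) := by
  ext i' j'
  simp [single, vecMulVec, Pi.single_apply, ← ite_and, and_comm, eq_comm]

section MatrixGame

variable {ι κ : Type*} [Fintype ι] [Fintype κ]

/-- Von Neumann's minimax theorem. -/
theorem exists_isSaddlePointOn_stdSimplex [Nonempty ι] [Nonempty κ] (M : Matrix ι κ ℝ) :
    ∃ π ∈ stdSimplex ℝ ι, ∃ q ∈ stdSimplex ℝ κ,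
      IsSaddlePointOn (stdSimplex ℝ ι) (stdSimplex ℝ κ) (fun π q => π ⬝ᵥ M *ᵥ q) π q := by
  classical
  refine Sion.exists_isSaddlePointOn ⟨_, single_mem_stdSimplex ℝ (Classical.arbitrary ι)⟩
    (convex_stdSimplex ℝ ι) (isCompact_stdSimplex ℝ ι) (fun q _ => ?_) (fun q _ => ?_)
    (convex_stdSimplex ℝ κ) ⟨_, single_mem_stdSimplex ℝ (Classical.arbitrary κ)⟩
    (isCompact_stdSimplex ℝ κ) (fun π _ => ?_) (fun π _ => ?_)
  · exact ((dotProductBilin ℝ ℝ).flip (M *ᵥ q)).continuous_of_finiteDimensional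
      |>.lowerSemicontinuous.lowerSemicontinuousOn _
  · exact ((dotProductBilin ℝ ℝ).flip (M *ᵥ q)).convexOn (convex_stdSimplex ℝ ι)
      |>.quasiconvexOn
  · simp_rw [dotProduct_mulVec]
    exact (dotProductBilin ℝ ℝ (π ᵥ* M)).continuous_of_finiteDimensional
      |>.upperSemicontinuous.upperSemicontinuousOn _
  · simp_rw [dotProduct_mulVec]
    exact (dotProductBilin ℝ ℝ (π ᵥ* M)).concaveOn (convex_stdSimplex ℝ κ) |>.quasiconcaveOn

/-- Fractional covering/packing duality: `x` and `y` are the optimal strategies of the matrix game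
`M`, rescaled by its value. -/
theorem exists_cover_packing_sum_eq (M : Matrix ι κ ℝ) (hM : ∀ i k, 0 ≤ M i k)
    (hcov : ∀ i, ∃ k, 0 < M i k) :
    ∃ (x : κ → ℝ) (y : ι → ℝ), 0 ≤ x ∧ 0 ≤ y ∧ (∀ i, 1 ≤ (M *ᵥ x) i) ∧
      (∀ k, (y ᵥ* M) k ≤ 1) ∧ ∑ k, x k = ∑ i, y i := by
  classical
  rcases isEmpty_or_nonempty ι with hι | hι
  · exact ⟨0, 0, le_rfl, le_rfl, isEmptyElim, by simp, by simp⟩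
  have : Nonempty κ := ⟨(hcov hι.some).choose⟩
  obtain ⟨π, hπ, q, hq, hsaddle⟩ := M.exists_isSaddlePointOn_stdSimplex
  set v := π ⬝ᵥ M *ᵥ q
  have hcover (i : ι) : v ≤ (M *ᵥ q) i := by
    simpa using hsaddle (Pi.single i 1) (single_mem_stdSimplex ℝ i) q hq
  have hpack (k : κ) : (π ᵥ* M) k ≤ v := by
    have h : π ⬝ᵥ M *ᵥ Pi.single k 1 ≤ v :=
      hsaddle π hπ (Pi.single k 1) (single_mem_stdSimplex ℝ k)
    rwa [dotProduct_mulVec π M, dotProduct_single, mul_one] at h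
  have hv : 0 < v := by
    obtain ⟨i, -, hi⟩ := Finset.exists_lt_of_sum_lt (s := Finset.univ)
      (f := fun _ => (0 : ℝ)) (g := π) (by simp [hπ.2])
    obtain ⟨k, hk⟩ := hcov i
    calc 0 < π i * M i k := mul_pos hi hk
      _ ≤ (π ᵥ* M) k := Finset.single_le_sum (f := fun i => π i * M i k)
          (fun i _ => mul_nonneg (hπ.1 i) (hM i k)) (Finset.mem_univ i)
      _ ≤ v := hpack k
  refine ⟨v⁻¹ • q, v⁻¹ • π, smul_nonneg (inv_nonneg.2 hv.le) hq.1,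
    smul_nonneg (inv_nonneg.2 hv.le) hπ.1, fun i => ?_, fun k => ?_, ?_⟩
  · rw [mulVec_smul, Pi.smul_apply, smul_eq_mul, ← div_eq_inv_mul, one_le_div hv]
    exact hcover i
  · rw [smul_vecMul, Pi.smul_apply, smul_eq_mul, ← div_eq_inv_mul, div_le_one hv]
    exact hpack k
  · simp [← Finset.mul_sum, hq.2, hπ.2]

end MatrixGame

end Matrix

theorem Fintype.sum_dite_eq_sum_subtype {α M : Type*} [Fintype α] [AddCommMonoid M]
    (P : α → Prop) [DecidablePred P] (f : Subtype P → M) :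
    ∑ a, (if h : P a then f ⟨a, h⟩ else 0) = ∑ k, f k := by
  rw [Finset.sum_dite, Finset.sum_const_zero, add_zero]
  exact Fintype.sum_equiv (Equiv.subtypeEquivRight (by simp)) _ _ fun _ => rfl

section Rectangles

variable {m n : Type*}

def IsMonoRect (A : Matrix m n ℝ) (S : Finset m × Finset n) : Prop :=
  ∀ i ∈ S.1, ∀ j ∈ S.2, 0 < A i j

noncomputable instance (A : Matrix m n ℝ) : DecidablePred (IsMonoRect A) :=
  Classical.decPred _

theorem exists_isMonoRect_of_mem_Aplus [Fintype m] [Fintype n] {A R : Matrix m n ℝ}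
    (hR : R ∈ Aplus A) : ∃ S, IsMonoRect A S ∧ ∀ i j, 0 < R i j → i ∈ S.1 ∧ j ∈ S.2 := by
  classical
  obtain ⟨hrank, hbound⟩ := hR
  refine ⟨(({i | ∃ j, 0 < R i j} : Finset m), ({j | ∃ i, 0 < R i j} : Finset n)), ?_,
    fun i j hij => ?_⟩
  · simp only [IsMonoRect, Finset.mem_filter, Finset.mem_univ, true_and]
    rintro i ⟨j', hij'⟩ j ⟨i', hi'j⟩
    exact (pos_of_rank_le_one hrank (fun i j => (hbound i j).1) hij' hi'j).trans_le
      (hbound i j).2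
  · simp only [Finset.mem_filter, Finset.mem_univ, true_and]
    exact ⟨⟨j, hij⟩, ⟨i, hij⟩⟩

variable [DecidableEq m] [DecidableEq n]

def rectIncidence (A : Matrix m n ℝ) :
    Matrix {p : m × n // 0 < A p.1 p.2} {S : Finset m × Finset n // IsMonoRect A S} ℝ :=
  fun p S => if p.1.1 ∈ S.1.1 ∧ p.1.2 ∈ S.1.2 then 1 else 0

theorem rectIncidence_nonneg (A : Matrix m n ℝ) (p : {p : m × n // 0 < A p.1 p.2})
    (S : {S : Finset m × Finset n // IsMonoRect A S}) : 0 ≤ rectIncidence A p S := by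
  unfold rectIncidence; split_ifs <;> norm_num

theorem exists_rectIncidence_pos (A : Matrix m n ℝ) (p : {p : m × n // 0 < A p.1 p.2}) :
    ∃ S, 0 < rectIncidence A p S :=
  ⟨⟨({p.1.1}, {p.1.2}), by simpa [IsMonoRect] using p.2⟩, by simp [rectIncidence]⟩

variable [Fintype m] [Fintype n]

/-- `χ_frac(RG(A))`. -/
noncomputable def fracRectCoverNumber (A : Matrix m n ℝ) : ℝ :=
  sInf {s : ℝ | ∃ x : Finset m × Finset n → ℝ,
    (∀ R, 0 ≤ x R) ∧
    (∀ R, x R ≠ 0 → IsMonoRect A R) ∧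
    (∀ i j, 0 < A i j →
      1 ≤ ∑ R : Finset m × Finset n, if i ∈ R.1 ∧ j ∈ R.2 then x R else 0) ∧
    s = ∑ R : Finset m × Finset n, x R}

theorem fracRectCoverNumber_le_sum (A : Matrix m n ℝ) (x : {S // IsMonoRect A S} → ℝ)
    (hx : 0 ≤ x) (hcover : ∀ p, 1 ≤ (rectIncidence A *ᵥ x) p) :
    fracRectCoverNumber A ≤ ∑ k, x k := by
  set x' : Finset m × Finset n → ℝ := fun R => if h : IsMonoRect A R then x ⟨R, h⟩ else 0
  refine csInf_le ⟨0, ?_⟩ ⟨x', fun R => ?_, fun R hR => ?_, fun i j hij => ?_,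
    (Fintype.sum_dite_eq_sum_subtype _ x).symm⟩
  · rintro _ ⟨y, hy, -, -, rfl⟩
    exact Finset.sum_nonneg fun R _ => hy R
  · exact dite_nonneg (fun _ => hx _) fun _ => le_rfl
  · by_contra h
    simp [x', h] at hR
  · calc 1 ≤ (rectIncidence A *ᵥ x) ⟨(i, j), hij⟩ := hcover _
      _ = ∑ k, rectIncidence A ⟨(i, j), hij⟩ k * x k := rfl
      _ = _ := by
        rw [← Fintype.sum_dite_eq_sum_subtype]
        refine Finset.sum_congr rfl fun R _ => ?_
        unfold x' rectIncidence
        split_ifs <;> simp_all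

theorem single_mem_Aplus {A : Matrix m n ℝ} (hA : ∀ i j, 0 ≤ A i j) (i : m) (j : n) :
    single i j (A i j) ∈ Aplus A := by
  refine ⟨single_eq_vecMulVec i j (A i j) ▸ rank_vecMulVec_le _ _, fun i' j' => ?_⟩
  by_cases h : i = i' ∧ j = j'
  · obtain ⟨rfl, rfl⟩ := h
    simp [hA]
  · simp [single_apply_of_ne _ _ _ _ _ h, hA]

theorem le_tauPlus {A : Matrix m n ℝ} (hA : ∀ i j, 0 ≤ A i j) (L : Matrix m n ℝ →ₗ[ℝ] ℝ)
    (hL : ∀ R ∈ Aplus A, L R ≤ 1) : L A ≤ tauPlus A := by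
  refine le_csSup ⟨Fintype.card m * Fintype.card n, ?_⟩ ⟨L, hL, rfl⟩
  rintro _ ⟨L', hL', rfl⟩
  calc L' A = ∑ i, ∑ j, L' (single i j (A i j)) := by
        conv_lhs => rw [matrix_eq_sum_single A]
        simp only [map_sum]
    _ ≤ ∑ _i : m, ∑ _j : n, 1 := by
        gcongr with i _ j _
        exact hL' _ (single_mem_Aplus hA i j)
    _ = Fintype.card m * Fintype.card n := by simp

theorem sum_le_tauPlus {A : Matrix m n ℝ} (hA : ∀ i j, 0 ≤ A i j)
    (y : {p : m × n // 0 < A p.1 p.2} → ℝ) (hy : 0 ≤ y)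
    (hpack : ∀ S, (y ᵥ* rectIncidence A) S ≤ 1) :
    ∑ p, y p ≤ tauPlus A := by
  set L : Matrix m n ℝ →ₗ[ℝ] ℝ :=
    ∑ p, (y p / A p.1.1 p.1.2) • entryLinearMap ℝ ℝ p.1.1 p.1.2
  have hL (M : Matrix m n ℝ) : L M = ∑ p, y p / A p.1.1 p.1.2 * M p.1.1 p.1.2 := by
    simp [L]
  have hLA : L A = ∑ p, y p := by
    simp only [hL]
    exact Finset.sum_congr rfl fun p _ => div_mul_cancel₀ _ p.2.ne'
  refine hLA ▸ le_tauPlus hA L fun R hR => ?_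
  obtain ⟨S, hS, hsupp⟩ := exists_isMonoRect_of_mem_Aplus hR
  have hentry (p : {p : m × n // 0 < A p.1 p.2}) :
      y p / A p.1.1 p.1.2 * R p.1.1 p.1.2 ≤ y p * rectIncidence A p ⟨S, hS⟩ := by
    rcases (hR.2 p.1.1 p.1.2).1.eq_or_lt with h0 | hpos
    · rw [← h0, mul_zero]
      exact mul_nonneg (hy p) (rectIncidence_nonneg A p _)
    · simp only [rectIncidence, hsupp _ _ hpos, and_self, if_true, mul_one]
      calc y p / A p.1.1 p.1.2 * R p.1.1 p.1.2 ≤ y p / A p.1.1 p.1.2 * A p.1.1 p.1.2 := by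
            gcongr
            · exact div_nonneg (hy p) p.2.le
            · exact (hR.2 _ _).2
        _ = y p := div_mul_cancel₀ _ p.2.ne'
  calc L R ≤ (y ᵥ* rectIncidence A) ⟨S, hS⟩ :=
        (hL R).trans_le (Finset.sum_le_sum fun p _ => hentry p)
    _ ≤ 1 := hpack _

end Rectangles

/-- `τ₊(A)` is at least the fractional rectangle cover number of `A`:
the infimum of total weight of nonnegative weights on monochromatic rectangles of `A`
fractionally covering the support of `A` is at most `τ₊(A)`. -/
theorem stmt10 {m n : ℕ} (A : Matrix (Fin m) (Fin n) ℝ) (hA : ∀ i j, 0 ≤ A i j) :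
    sInf {s : ℝ | ∃ x : Finset (Fin m) × Finset (Fin n) → ℝ,
      (∀ R, 0 ≤ x R) ∧
      (∀ R, x R ≠ 0 → ∀ i ∈ R.1, ∀ j ∈ R.2, 0 < A i j) ∧
      (∀ i j, 0 < A i j →
        1 ≤ ∑ R : Finset (Fin m) × Finset (Fin n),
              if i ∈ R.1 ∧ j ∈ R.2 then x R else 0) ∧
      s = ∑ R : Finset (Fin m) × Finset (Fin n), x R} ≤ tauPlus A := by
  obtain ⟨x, y, hx, hy, hcover, hpack, hxy⟩ := (rectIncidence A).exists_cover_packing_sum_eq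
    (rectIncidence_nonneg A) (exists_rectIncidence_pos A)
  calc fracRectCoverNumber A ≤ ∑ k, x k := fracRectCoverNumber_le_sum A x hx hcover
    _ = ∑ p, y p := hxy
    _ ≤ tauPlus A := sum_le_tauPlus hA y hy hpack
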